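/- There exists a universal constant c > 0 such that with probability at least 1 − 2exp(−c·n), it holds simultaneously for all X₁, X₂ ∈ S_p with σ_max(X₁) ≤ R and σ_max(X₂) ≤ R that |F_n(X₁, Z₁ⁿ) − F_n(X₂, Z₁ⁿ)| ≤ (2K_C + C_μ)·‖X₁ − X₂‖. -/

import Mathlib

open MeasureTheory ProbabilityTheory

attribute [local instance] Matrix.frobeniusNormedAddCommGroup Matrix.frobeniusNormedSpace

/-- Eigenvalues of a real symmetric matrix (junk value `0` otherwise). -/
noncomputable def eigs {p : ℕ} (X : Matrix (Fin p) (Fin p) ℝ) (j : Fin p) : ℝ :=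
  if h : X.IsHermitian then h.eigenvalues j else 0

/-- The largest singular value (spectral norm). -/
noncomputable def sigmaMax {p : ℕ} (X : Matrix (Fin p) (Fin p) ℝ) : ℝ :=
  ⨆ j, Real.sqrt (eigs (X.transpose * X) j)

/-- Sample average `F_n(X, Z₁ⁿ)`. -/
noncomputable def Fn {p n : ℕ} {W : Type*} (f : Matrix (Fin p) (Fin p) ℝ → W → ℝ)
    (z : Fin n → W) (X : Matrix (Fin p) (Fin p) ℝ) : ℝ :=
  (1 / (n : ℝ)) * ∑ i, f X (z i)

/-!
Apply the Bernstein inequality once, to the unit weights `aᵢ = 1` at level `t = n`: outside an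
event of probability at most `2 exp(-c_B n)` the centred sum `∑ (C(Zᵢ) - E C(Zᵢ))` is at most
`2 K_C n`, so `∑ C(Zᵢ) ≤ (2 K_C + C_μ) n`. On that event every summand of
`F_n(X₁) - F_n(X₂)` is controlled by the Lipschitz property of `f`, whence the claim with `c = c_B`.
-/

lemma abs_Fn_sub_le {p n : ℕ} {W : Type*} (f : Matrix (Fin p) (Fin p) ℝ → W → ℝ)
    (z : Fin n → W) (L : W → ℝ) {X1 X2 : Matrix (Fin p) (Fin p) ℝ}
    (hf : ∀ i, |f X1 (z i) - f X2 (z i)| ≤ L (z i) * ‖X1 - X2‖) :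
    |Fn f z X1 - Fn f z X2| ≤ (∑ i, L (z i)) / n * ‖X1 - X2‖ := by
  have hdiff : Fn f z X1 - Fn f z X2 = (∑ i, (f X1 (z i) - f X2 (z i))) / n := by
    simp only [Fn, Finset.sum_sub_distrib]
    ring
  rw [hdiff, abs_div, Nat.abs_cast, div_mul_eq_mul_div, Finset.sum_mul]
  gcongr
  exact (Finset.abs_sum_le_sum_abs _ _).trans (Finset.sum_le_sum fun i _ => hf i)

lemma bernstein_threshold_ones (n : ℕ) (K : ℝ) :
    K * (Real.sqrt (∑ _i : Fin n, (1 : ℝ) ^ 2) * Real.sqrt n + (⨆ _i : Fin n, |(1 : ℝ)|) * n) =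
      2 * K * n := by
  rcases n.eq_zero_or_pos with rfl | hn
  · simp
  · have : Nonempty (Fin n) := ⟨⟨0, hn⟩⟩
    simp only [one_pow, Finset.sum_const, Finset.card_univ, Fintype.card_fin, nsmul_eq_mul,
      mul_one, abs_one, ciSup_const, one_mul, Real.mul_self_sqrt n.cast_nonneg]
    ring

lemma integral_le_of_integral_abs_le {Ω : Type*} [MeasurableSpace Ω] {μ : Measure Ω}
    {Y : Ω → ℝ} {M : ℝ} (h : ∫ ω, |Y ω| ∂μ ≤ M) : ∫ ω, Y ω ∂μ ≤ M :=
  (le_abs_self _).trans (abs_integral_le_integral_abs.trans h)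

lemma sum_le_of_not_lt_bernstein_threshold {Ω : Type*} [MeasurableSpace Ω] {μ : Measure Ω}
    {n : ℕ} {Y : Fin n → Ω → ℝ} {K M : ℝ} (hY : ∀ i, ∫ ω, |Y i ω| ∂μ ≤ M) {ω : Ω}
    (hω : ¬ K * (Real.sqrt (∑ _i : Fin n, (1 : ℝ) ^ 2) * Real.sqrt n +
        (⨆ _i : Fin n, |(1 : ℝ)|) * n) < |∑ i, 1 * (Y i ω - ∫ ω', Y i ω' ∂μ)|) :
    ∑ i, Y i ω ≤ (2 * K + M) * n := by
  rw [bernstein_threshold_ones, not_lt] at hω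
  simp only [one_mul, Finset.sum_sub_distrib] at hω
  have hmean : ∑ i, ∫ ω', Y i ω' ∂μ ≤ n * M := by
    simpa using Finset.sum_le_sum fun i (_ : i ∈ Finset.univ) =>
      integral_le_of_integral_abs_le (hY i)
  linarith [le_abs_self (∑ i, Y i ω - ∑ i, ∫ ω', Y i ω' ∂μ)]

lemma one_sub_toReal_measure_le_of_ae_imp {Ω : Type*} [MeasurableSpace Ω]
    {μ : Measure Ω} [IsProbabilityMeasure μ] {B E : Set Ω} (h : ∀ᵐ ω ∂μ, ω ∉ B → ω ∈ E) :
    1 - (μ B).toReal ≤ (μ E).toReal := by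
  have hcover : μ Set.univ ≤ μ E + μ B :=
    calc μ Set.univ ≤ μ (E ∪ B) :=
          measure_mono_ae (h.mono fun _ hω _ => or_iff_not_imp_right.2 hω)
      _ ≤ μ E + μ B := measure_union_le E B
  have := ENNReal.toReal_mono (by finiteness) hcover
  rw [ENNReal.toReal_add (by finiteness) (by finiteness), measure_univ, ENNReal.toReal_one] at this
  linarith

theorem Fn_uniform_lipschitz_whp_general (cB : ℝ) (hcB0 : 0 < cB) :
    ∃ c : ℝ, 0 < c ∧
      ∀ (Ω : Type) (q : ℕ) (W : Set (Fin q → ℝ)) [MeasurableSpace Ω]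
        (μ : Measure Ω) [IsProbabilityMeasure μ]
        (p n : ℕ) (f : Matrix (Fin p) (Fin p) ℝ → W → ℝ) (Z : Fin n → Ω → W)
        (C : W → ℝ) (R Cmu KC : ℝ),
        1 ≤ R → 1 ≤ Cmu → 1 ≤ KC →
        (∀ i, Measurable (Z i)) →
        iIndepFun Z μ →
        (∀ i j, IdentDistrib (Z i) (Z j) μ μ) →
        (∀ i, ∫ ω, |C (Z i ω)| ∂μ ≤ Cmu) →
        -- Bernstein-type inequality for the sub-exponential variables `C(Zᵢ) − E C(Zᵢ)`
        (∀ t : ℝ, 0 ≤ t → ∀ aa : Fin n → ℝ,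
          (μ {ω | KC * (Real.sqrt (∑ i, aa i ^ 2) * Real.sqrt t + (⨆ i, |aa i|) * t) <
            |∑ i, aa i * (C (Z i ω) - ∫ ω', C (Z i ω') ∂μ)|}).toReal ≤
              2 * Real.exp (-cB * t)) →
        -- Lipschitz property of `f` (assumption (A4))
        (∀ i, ∀ᵐ ω ∂μ, ∀ X1 X2 : Matrix (Fin p) (Fin p) ℝ,
          X1.PosSemidef → X2.PosSemidef →
          |f X1 (Z i ω) - f X2 (Z i ω)| ≤ C (Z i ω) * ‖X1 - X2‖) →
        1 - 2 * Real.exp (-c * n) ≤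
          (μ {ω | ∀ X1 X2 : Matrix (Fin p) (Fin p) ℝ,
            X1.PosSemidef → sigmaMax X1 ≤ R → X2.PosSemidef → sigmaMax X2 ≤ R →
            |Fn f (fun i => Z i ω) X1 - Fn f (fun i => Z i ω) X2| ≤
              (2 * KC + Cmu) * ‖X1 - X2‖}).toReal := by
  refine ⟨cB, hcB0, ?_⟩
  intro Ω q W _ μ _ p n f Z C R Cmu KC _ hCmu hKC _ _ _ hint hBern hLip
  refine (sub_le_sub_left (hBern n n.cast_nonneg fun _ => 1) 1).trans
    (one_sub_toReal_measure_le_of_ae_imp ?_)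
  filter_upwards [ae_all_iff.2 hLip] with ω hLipω hgood X1 X2 hX1 _ hX2 _
  have hsum : ∑ i, C (Z i ω) ≤ (2 * KC + Cmu) * n :=
    sum_le_of_not_lt_bernstein_threshold (Y := fun i ω => C (Z i ω)) hint hgood
  refine (abs_Fn_sub_le f _ C fun i => hLipω i X1 X2 hX1 hX2).trans ?_
  gcongr
  exact div_le_of_le_mul₀ n.cast_nonneg (by linarith) hsum

/-- there is a universal constant `c > 0` (depending only on the absolute
Bernstein constant `cB ∈ (0, 1/2]` of assumption (A4)) such that, with probability at
least `1 − 2·exp(−c·n)`, the sample average `F_n(·, Z₁ⁿ)` is `(2K_C + C_μ)`-Lipschitz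
(in the Frobenius norm) on `{X ∈ S_p : σ_max(X) ≤ R}`, simultaneously for all pairs. -/
theorem Fn_uniform_lipschitz_whp (cB : ℝ) (hcB0 : 0 < cB) (hcB : cB ≤ 1 / 2) :
    ∃ c : ℝ, 0 < c ∧
      ∀ (Ω : Type) (q : ℕ) (W : Set (Fin q → ℝ)) [MeasurableSpace Ω]
        (μ : Measure Ω) [IsProbabilityMeasure μ]
        (p n : ℕ) (f : Matrix (Fin p) (Fin p) ℝ → W → ℝ) (Z : Fin n → Ω → W)
        (C : W → ℝ) (R Cmu KC : ℝ),
        1 ≤ R → 1 ≤ Cmu → 1 ≤ KC →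
        (∀ i, Measurable (Z i)) →
        iIndepFun Z μ →
        (∀ i j, IdentDistrib (Z i) (Z j) μ μ) →
        (∀ i, ∫ ω, |C (Z i ω)| ∂μ ≤ Cmu) →
        -- Bernstein-type inequality for the sub-exponential variables `C(Zᵢ) − E C(Zᵢ)`
        (∀ t : ℝ, 0 ≤ t → ∀ aa : Fin n → ℝ,
          (μ {ω | KC * (Real.sqrt (∑ i, aa i ^ 2) * Real.sqrt t + (⨆ i, |aa i|) * t) <
            |∑ i, aa i * (C (Z i ω) - ∫ ω', C (Z i ω') ∂μ)|}).toReal ≤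
              2 * Real.exp (-cB * t)) →
        -- Lipschitz property of `f` (assumption (A4))
        (∀ i, ∀ᵐ ω ∂μ, ∀ X1 X2 : Matrix (Fin p) (Fin p) ℝ,
          X1.PosSemidef → X2.PosSemidef →
          |f X1 (Z i ω) - f X2 (Z i ω)| ≤ C (Z i ω) * ‖X1 - X2‖) →
        1 - 2 * Real.exp (-c * n) ≤
          (μ {ω | ∀ X1 X2 : Matrix (Fin p) (Fin p) ℝ,
            X1.PosSemidef → sigmaMax X1 ≤ R → X2.PosSemidef → sigmaMax X2 ≤ R →
            |Fn f (fun i => Z i ω) X1 - Fn f (fun i => Z i ω) X2| ≤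
              (2 * KC + Cmu) * ‖X1 - X2‖}).toReal :=
  Fn_uniform_lipschitz_whp_general cB hcB0
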